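/- For all real a, b > 0, ∫_ℂ log⁺|z| · |P(z)|⁻¹ dℓ(z) ≥ log(√(ab)) · ∫_ℂ |P(z)|⁻¹ dℓ(z). (Equivalently, the probability measure C_P⁻¹ |P(z)|⁻¹ ℓ(z) gives ∫ log⁺|z| dμ ≥ log √(ab).) -/

import Mathlib

/-!
Write `P z = z (z - a) (z + b)` and `μ = ‖P‖⁻¹ ℓ`. The holomorphic involution `ι z = -ab / z`
preserves `μ`: `P (ι z) = a²b² (z - a)(z + b) / z³`, and the real Jacobian of `ι` is
`‖ι' z‖² = (ab)² / ‖z‖⁴`, so `‖ι' z‖² ‖P (ι z)‖⁻¹ = ‖P z‖⁻¹`. As `‖ι z‖ = ab / ‖z‖`, this gives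
`∫ log⁺ ‖z‖ dμ = ∫ log⁺ (ab / ‖z‖) dμ`, and averaging the two against the pointwise bound
`log (ab) ≤ log⁺ r + log⁺ (ab / r)` proves the claim. Both integrals are finite: by partial
fractions `‖P‖⁻¹` has only singularities of type `‖z - c‖⁻¹`, and it decays like `‖z‖⁻³`.
-/

open MeasureTheory Real

/-- `log⁺ r = log (max 1 r)`. -/
noncomputable def logPlus (r : ℝ) : ℝ := Real.log (max 1 r)

open Set Filter Asymptotics Module Bornology

namespace Complex

theorem det_restrictScalars_toSpanSingleton (d : ℂ) :
    ((ContinuousLinearMap.toSpanSingleton ℂ d).restrictScalars ℝ).det = ‖d‖ ^ 2 := by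
  simp [ContinuousLinearMap.det, LinearMap.det_restrictScalars, Algebra.norm_complex_eq,
    Complex.normSq_eq_norm_sq]

variable {E : Type*} [NormedAddCommGroup E] [NormedSpace ℝ E]

theorem integral_image_eq_integral_norm_sq_deriv_smul {s : Set ℂ} (hs : MeasurableSet s)
    {f f' : ℂ → ℂ} (hf : ∀ x ∈ s, HasDerivWithinAt f (f' x) s x) (hinj : InjOn f s) (g : ℂ → E) :
    ∫ x in f '' s, g x = ∫ x in s, ‖f' x‖ ^ 2 • g (f x) := by
  simpa [det_restrictScalars_toSpanSingleton] using
    integral_image_eq_integral_abs_det_fderiv_smul volume hs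
      (fun x hx => (hf x hx).hasFDerivWithinAt.restrictScalars ℝ) hinj g

theorem integrableOn_image_iff_integrableOn_norm_sq_deriv_smul {s : Set ℂ} (hs : MeasurableSet s)
    {f f' : ℂ → ℂ} (hf : ∀ x ∈ s, HasDerivWithinAt f (f' x) s x) (hinj : InjOn f s) (g : ℂ → E) :
    IntegrableOn g (f '' s) ↔ IntegrableOn (fun x => ‖f' x‖ ^ 2 • g (f x)) s := by
  simpa [det_restrictScalars_toSpanSingleton] using
    integrableOn_image_iff_integrableOn_abs_det_fderiv_smul volume hs
      (fun x hx => (hf x hx).hasFDerivWithinAt.restrictScalars ℝ) hinj g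

theorem involutive_const_div {c : ℂ} (hc : c ≠ 0) : Function.Involutive (c / · : ℂ → ℂ) :=
  fun _ => div_div_cancel₀ hc

theorem image_const_div_compl_zero {c : ℂ} (hc : c ≠ 0) :
    (c / ·) '' ({0}ᶜ : Set ℂ) = {0}ᶜ := by
  rw [(involutive_const_div hc).image_eq_preimage_symm]
  ext z
  simp [hc]

theorem hasDerivWithinAt_const_div_compl_zero (c : ℂ) :
    ∀ z ∈ ({0}ᶜ : Set ℂ), HasDerivWithinAt (c / ·) (c * -(z ^ 2)⁻¹) {0}ᶜ z := fun _ hz =>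
  ((hasDerivAt_inv hz).const_mul c).hasDerivWithinAt

theorem norm_sq_deriv_const_div (c z : ℂ) : ‖c * -(z ^ 2)⁻¹‖ ^ 2 = ‖c‖ ^ 2 / ‖z‖ ^ 4 := by
  simp [mul_pow, div_eq_mul_inv, ← pow_mul]

theorem integral_comp_const_div {c : ℂ} (hc : c ≠ 0) (g : ℂ → E) :
    ∫ z, (‖c‖ ^ 2 / ‖z‖ ^ 4) • g (c / z) = ∫ z, g z := by
  have h := integral_image_eq_integral_norm_sq_deriv_smul (measurableSet_singleton 0).compl
    (hasDerivWithinAt_const_div_compl_zero c) (involutive_const_div hc).injective.injOn g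
  simp only [norm_sq_deriv_const_div, image_const_div_compl_zero hc, restrict_compl_singleton] at h
  exact h.symm

theorem integrable_comp_const_div_iff {c : ℂ} (hc : c ≠ 0) (g : ℂ → E) :
    Integrable (fun z => (‖c‖ ^ 2 / ‖z‖ ^ 4) • g (c / z)) ↔ Integrable g := by
  have h := integrableOn_image_iff_integrableOn_norm_sq_deriv_smul (measurableSet_singleton 0).compl
    (hasDerivWithinAt_const_div_compl_zero c) (involutive_const_div hc).injective.injOn g
  simp only [norm_sq_deriv_const_div, image_const_div_compl_zero hc, IntegrableOn,
    restrict_compl_singleton] at h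
  exact h.symm

end Complex

theorem MeasureTheory.LocallyIntegrable.comp_sub_right {G F : Type*} [AddGroup G]
    [TopologicalSpace G] [IsTopologicalAddGroup G] [MeasurableSpace G] [MeasurableAdd G]
    [NormedAddCommGroup F] {μ : Measure G} [μ.IsAddRightInvariant] {f : G → F}
    (hf : LocallyIntegrable f μ) (c : G) : LocallyIntegrable (fun x => f (x - c)) μ := by
  intro x
  obtain ⟨s, hs, hfs⟩ := hf (x - c)
  refine ⟨(· - c) ⁻¹' s, (continuous_sub_right c).continuousAt.preimage_mem_nhds hs, ?_⟩
  exact ((measurePreserving_sub_right μ c).integrableOn_comp_preimage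
    (measurableEmbedding_subRight c)).2 hfs

section HaarIntegrability

variable {E : Type*} [NormedAddCommGroup E] [NormedSpace ℝ E] [FiniteDimensional ℝ E]
  [MeasurableSpace E] [BorelSpace E] {μ : Measure E} [μ.IsAddHaarMeasure]

theorem locallyIntegrable_inv_norm (hE : 2 ≤ finrank ℝ E) :
    LocallyIntegrable (fun x : E => ‖x‖⁻¹) μ :=
  locallyIntegrable_of_norm_le_rpow (C := 1) (α := 1) (by omega) (by exact_mod_cast hE)
    (ae_of_all _ fun x => by simp [Real.rpow_neg_one]) (by fun_prop)

theorem integrableAtFilter_cocompact_norm_rpow_neg {r : ℝ} (hr : finrank ℝ E < r) :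
    IntegrableAtFilter (fun x : E => ‖x‖ ^ (-r)) (cocompact E) μ := by
  have hr0 : 0 ≤ r := le_trans (Nat.cast_nonneg _) hr.le
  refine IsBigO.integrableAtFilter ?_
    (by fun_prop : Measurable _).aestronglyMeasurable.stronglyMeasurableAtFilter
    ((integrable_one_add_norm hr).integrableAtFilter _)
  rw [← Metric.cobounded_eq_cocompact]
  refine IsBigO.of_bound (2 ^ r) ?_
  filter_upwards [tendsto_norm_cobounded_atTop.eventually_ge_atTop 1] with x hx
  calc ‖‖x‖ ^ (-r)‖ = 2 ^ r * (2 * ‖x‖) ^ (-r) := by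
        rw [Real.norm_of_nonneg (by positivity), Real.mul_rpow (by norm_num) (by positivity),
          Real.rpow_neg zero_le_two, ← mul_assoc, mul_inv_cancel₀ (by positivity), one_mul]
    _ ≤ 2 ^ r * (1 + ‖x‖) ^ (-r) := by
        gcongr 2 ^ r * ?_
        exact Real.rpow_le_rpow_of_nonpos (by positivity) (by linarith) (by linarith)
    _ = 2 ^ r * ‖(1 + ‖x‖) ^ (-r)‖ := by rw [Real.norm_of_nonneg (by positivity)]

end HaarIntegrability

section Cubic

theorem isBigO_inv_norm_cubic (α β γ : ℂ) :
    (fun z : ℂ => ‖(z - α) * (z - β) * (z - γ)‖⁻¹) =O[cobounded ℂ] fun z => ‖z‖ ^ (-3 : ℝ) := by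
  have h (c : ℂ) : (fun z : ℂ => z - c) ~[cobounded ℂ] id :=
    (IsEquivalent.refl.add_isLittleO (isLittleO_const_id_cobounded (-c))).congr_left
      (.of_forall fun z => (sub_eq_add_neg z c).symm)
  refine (((h α).mul (h β)).mul (h γ)).inv.isBigO.norm_norm.congr (fun z => ?_) (fun z => ?_)
  · simp
  · simp [Real.rpow_neg (norm_nonneg z)]
    ring

variable {α β γ : ℂ}

theorem inv_norm_cubic_le (hαβ : α ≠ β) (hαγ : α ≠ γ) (hβγ : β ≠ γ) (z : ℂ) :
    ‖(z - α) * (z - β) * (z - γ)‖⁻¹ ≤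
      ‖((α - β) * (α - γ))⁻¹‖ * ‖z - α‖⁻¹ + ‖((β - α) * (β - γ))⁻¹‖ * ‖z - β‖⁻¹ +
        ‖((γ - α) * (γ - β))⁻¹‖ * ‖z - γ‖⁻¹ := by
  by_cases hz : (z - α) * (z - β) * (z - γ) = 0
  · rw [hz, norm_zero, inv_zero]
    positivity
  obtain ⟨⟨hzα, hzβ⟩, hzγ⟩ := mul_ne_zero_iff.1 hz |>.imp_left mul_ne_zero_iff.1
  have hpartial : ((z - α) * (z - β) * (z - γ))⁻¹ = ((α - β) * (α - γ))⁻¹ * (z - α)⁻¹ +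
      ((β - α) * (β - γ))⁻¹ * (z - β)⁻¹ + ((γ - α) * (γ - β))⁻¹ * (z - γ)⁻¹ := by
    have := sub_ne_zero.2 hαβ
    have := sub_ne_zero.2 hαγ
    have := sub_ne_zero.2 hβγ
    field_simp
    ring
  rw [← norm_inv, hpartial]
  refine (norm_add₃_le).trans_eq ?_
  simp only [norm_mul, norm_inv]

theorem locallyIntegrable_inv_norm_cubic (hαβ : α ≠ β) (hαγ : α ≠ γ) (hβγ : β ≠ γ) :
    LocallyIntegrable fun z : ℂ => ‖(z - α) * (z - β) * (z - γ)‖⁻¹ := by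
  have h (c : ℂ) : LocallyIntegrable fun z : ℂ => ‖z - c‖⁻¹ :=
    (locallyIntegrable_inv_norm (by simp)).comp_sub_right c
  have hdom : LocallyIntegrable fun z : ℂ =>
      ‖((α - β) * (α - γ))⁻¹‖ * ‖z - α‖⁻¹ + ‖((β - α) * (β - γ))⁻¹‖ * ‖z - β‖⁻¹ +
        ‖((γ - α) * (γ - β))⁻¹‖ * ‖z - γ‖⁻¹ :=
    (((h α).continuous_mul continuous_const).add ((h β).continuous_mul continuous_const)).add
      ((h γ).continuous_mul continuous_const)
  refine hdom.mono (by fun_prop) (ae_of_all _ fun z => ?_)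
  rw [Real.norm_of_nonneg (by positivity), Real.norm_of_nonneg (by positivity)]
  exact inv_norm_cubic_le hαβ hαγ hβγ z

theorem integrable_mul_inv_norm_cubic (hαβ : α ≠ β) (hαγ : α ≠ γ) (hβγ : β ≠ γ) {φ : ℂ → ℝ}
    (hφ : Continuous φ) {s : ℝ} (hs : s < 1) (hφs : φ =O[cobounded ℂ] fun z => ‖z‖ ^ s) :
    Integrable fun z => φ z * ‖(z - α) * (z - β) * (z - γ)‖⁻¹ := by
  have hloc := (locallyIntegrable_inv_norm_cubic hαβ hαγ hβγ).continuous_mul hφ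
  refine hloc.integrable_of_isBigO_cocompact ?_
    (integrableAtFilter_cocompact_norm_rpow_neg (r := 3 - s) (by simp; linarith))
  rw [← Metric.cobounded_eq_cocompact]
  refine (hφs.mul (isBigO_inv_norm_cubic α β γ)).congr' .rfl ?_
  filter_upwards [tendsto_norm_cobounded_atTop.eventually_gt_atTop 0] with z hz
  rw [← Real.rpow_add hz]
  ring_nf

end Cubic

theorem continuous_logPlus : Continuous logPlus :=
  (continuous_const.max continuous_id).log fun _ => by positivity

theorem isLittleO_logPlus_rpow_atTop {r : ℝ} (hr : 0 < r) : logPlus =o[atTop] fun x => x ^ r :=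
  (isLittleO_log_rpow_atTop hr).congr'
    ((eventually_ge_atTop 1).mono fun x hx => by rw [logPlus, max_eq_right hx]) .rfl

theorem log_le_logPlus_add_logPlus_div {c r : ℝ} (hc : 0 < c) (hr : 0 < r) :
    Real.log c ≤ logPlus r + logPlus (c / r) := by
  have h (x : ℝ) (hx : 0 < x) : Real.log x ≤ logPlus x := Real.log_le_log hx (le_max_right 1 x)
  calc Real.log c = Real.log r + Real.log (c / r) := by rw [Real.log_div hc.ne' hr.ne']; ring
    _ ≤ logPlus r + logPlus (c / r) := add_le_add (h r hr) (h _ (div_pos hc hr))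

section Weight

variable {a b : ℝ}

theorem norm_sq_div_mul_inv_norm_cubic_neg_div (ha : a ≠ 0) (hb : b ≠ 0) (z : ℂ) :
    ‖(-(a * b) : ℂ)‖ ^ 2 / ‖z‖ ^ 4 *
        ‖-(a * b) / z * (-(a * b) / z - a) * (-(a * b) / z + b)‖⁻¹ =
      ‖z * (z - a) * (z + b)‖⁻¹ := by
  rcases eq_or_ne z 0 with rfl | hz
  · simp
  have ha' : (a : ℂ) ≠ 0 := Complex.ofReal_ne_zero.2 ha
  have hb' : (b : ℂ) ≠ 0 := Complex.ofReal_ne_zero.2 hb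
  have hcubic : z ^ 4 / (-(a * b) : ℂ) ^ 2 *
      (-(a * b) / z * (-(a * b) / z - a) * (-(a * b) / z + b)) = z * (z - a) * (z + b) := by
    field_simp
    ring
  rw [← hcubic]
  generalize -(a * b) / z * (-(a * b) / z - a) * (-(a * b) / z + b) = w
  rw [norm_mul _ w, norm_div, norm_pow, norm_pow, mul_inv, inv_div]

theorem smul_comp_neg_div_mul_inv_norm_cubic (ha : a ≠ 0) (hb : b ≠ 0) (g : ℂ → ℝ) (z : ℂ) :
    (‖(-(a * b) : ℂ)‖ ^ 2 / ‖z‖ ^ 4) •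
        (g (-(a * b) / z) * ‖-(a * b) / z * (-(a * b) / z - a) * (-(a * b) / z + b)‖⁻¹) =
      g (-(a * b) / z) * ‖z * (z - a) * (z + b)‖⁻¹ := by
  rw [smul_eq_mul, mul_left_comm, norm_sq_div_mul_inv_norm_cubic_neg_div ha hb]

theorem integral_comp_neg_div_mul_inv_norm_cubic (ha : a ≠ 0) (hb : b ≠ 0) (g : ℂ → ℝ) :
    ∫ z, g (-(a * b) / z) * ‖z * (z - a) * (z + b)‖⁻¹ = ∫ z, g z * ‖z * (z - a) * (z + b)‖⁻¹ := by
  have hc : (-(a * b) : ℂ) ≠ 0 := by simp [ha, hb]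
  simpa only [smul_comp_neg_div_mul_inv_norm_cubic ha hb] using
    Complex.integral_comp_const_div hc fun z => g z * ‖z * (z - a) * (z + b)‖⁻¹

theorem integrable_comp_neg_div_mul_inv_norm_cubic_iff (ha : a ≠ 0) (hb : b ≠ 0) (g : ℂ → ℝ) :
    Integrable (fun z => g (-(a * b) / z) * ‖z * (z - a) * (z + b)‖⁻¹) ↔
      Integrable fun z => g z * ‖z * (z - a) * (z + b)‖⁻¹ := by
  have hc : (-(a * b) : ℂ) ≠ 0 := by simp [ha, hb]
  simpa only [smul_comp_neg_div_mul_inv_norm_cubic ha hb] using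
    Complex.integrable_comp_const_div_iff hc fun z => g z * ‖z * (z - a) * (z + b)‖⁻¹

theorem integrable_mul_inv_norm_cubic_of_pos (ha : 0 < a) (hb : 0 < b) {φ : ℂ → ℝ}
    (hφ : Continuous φ) {s : ℝ} (hs : s < 1) (hφs : φ =O[cobounded ℂ] fun z => ‖z‖ ^ s) :
    Integrable fun z => φ z * ‖z * (z - a) * (z + b)‖⁻¹ := by
  have h0a : (0 : ℂ) ≠ a := by exact_mod_cast ha.ne
  have h0b : (0 : ℂ) ≠ -b := by simp [hb.ne']
  have hab : (a : ℂ) ≠ -b := by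
    rw [← Complex.ofReal_neg]
    exact_mod_cast (by linarith : a ≠ -b)
  simpa using integrable_mul_inv_norm_cubic h0a h0b hab hφ hs hφs

theorem integrable_inv_norm_cubic_of_pos (ha : 0 < a) (hb : 0 < b) :
    Integrable fun z : ℂ => ‖z * (z - a) * (z + b)‖⁻¹ := by
  simpa using integrable_mul_inv_norm_cubic_of_pos ha hb (φ := 1) continuous_const one_pos
    (by simpa using isBoundedUnder_const)

theorem integrable_logPlus_norm_mul_inv_norm_cubic (ha : 0 < a) (hb : 0 < b) :
    Integrable fun z : ℂ => logPlus ‖z‖ * ‖z * (z - a) * (z + b)‖⁻¹ :=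
  integrable_mul_inv_norm_cubic_of_pos ha hb (continuous_logPlus.comp continuous_norm)
    one_half_lt_one
    ((isLittleO_logPlus_rpow_atTop one_half_pos).isBigO.comp_tendsto tendsto_norm_cobounded_atTop)

theorem norm_neg_mul_div (ha : 0 ≤ a) (hb : 0 ≤ b) (z : ℂ) :
    ‖(-(a * b) : ℂ) / z‖ = a * b / ‖z‖ := by
  rw [norm_div, norm_neg, norm_mul, Complex.norm_real, Complex.norm_real, Real.norm_of_nonneg ha,
    Real.norm_of_nonneg hb]

theorem integrable_logPlus_div_norm_mul_inv_norm_cubic (ha : 0 < a) (hb : 0 < b) :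
    Integrable fun z : ℂ => logPlus (a * b / ‖z‖) * ‖z * (z - a) * (z + b)‖⁻¹ := by
  simpa only [norm_neg_mul_div ha.le hb.le] using
    (integrable_comp_neg_div_mul_inv_norm_cubic_iff ha.ne' hb.ne' (logPlus ‖·‖)).2
      (integrable_logPlus_norm_mul_inv_norm_cubic ha hb)

theorem integral_logPlus_div_norm_mul_inv_norm_cubic (ha : 0 < a) (hb : 0 < b) :
    ∫ z : ℂ, logPlus (a * b / ‖z‖) * ‖z * (z - a) * (z + b)‖⁻¹ =
      ∫ z : ℂ, logPlus ‖z‖ * ‖z * (z - a) * (z + b)‖⁻¹ := by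
  simpa only [norm_neg_mul_div ha.le hb.le] using
    integral_comp_neg_div_mul_inv_norm_cubic ha.ne' hb.ne' (logPlus ‖·‖)

theorem log_mul_inv_norm_cubic_le (hab : 0 < a * b) (z : ℂ) :
    Real.log (a * b) * ‖z * (z - a) * (z + b)‖⁻¹ ≤
      (logPlus ‖z‖ + logPlus (a * b / ‖z‖)) * ‖z * (z - a) * (z + b)‖⁻¹ := by
  rcases eq_or_ne z 0 with rfl | hz
  · simp
  · exact mul_le_mul_of_nonneg_right
      (log_le_logPlus_add_logPlus_div hab (norm_pos_iff.2 hz)) (by positivity)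

end Weight

theorem stmt10 (a b : ℝ) (ha : 0 < a) (hb : 0 < b) :
    Real.log (Real.sqrt (a * b)) *
        ∫ z : ℂ, ‖z * (z - (a:ℂ)) * (z + (b:ℂ))‖⁻¹
      ≤ ∫ z : ℂ, logPlus ‖z‖ *
          ‖z * (z - (a:ℂ)) * (z + (b:ℂ))‖⁻¹ := by
  have hab : 0 < a * b := mul_pos ha hb
  have hlog := integrable_logPlus_norm_mul_inv_norm_cubic ha hb
  have hlog' := integrable_logPlus_div_norm_mul_inv_norm_cubic ha hb
  calc Real.log (Real.sqrt (a * b)) * ∫ z : ℂ, ‖z * (z - a) * (z + b)‖⁻¹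
      = (∫ z : ℂ, Real.log (a * b) * ‖z * (z - a) * (z + b)‖⁻¹) / 2 := by
        rw [Real.log_sqrt hab.le, integral_const_mul]
        ring
    _ ≤ (∫ z : ℂ, (logPlus ‖z‖ + logPlus (a * b / ‖z‖)) * ‖z * (z - a) * (z + b)‖⁻¹) / 2 := by
        refine div_le_div_of_nonneg_right (integral_mono ?_ ?_ (log_mul_inv_norm_cubic_le hab))
          zero_le_two
        · exact (integrable_inv_norm_cubic_of_pos ha hb).const_mul _
        · exact (hlog.add hlog').congr (.of_forall fun z => (add_mul _ _ _).symm)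
    _ = ∫ z : ℂ, logPlus ‖z‖ * ‖z * (z - a) * (z + b)‖⁻¹ := by
        simp only [add_mul]
        rw [integral_add hlog hlog', integral_logPlus_div_norm_mul_inv_norm_cubic ha hb]
        ring
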